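/- Let F be a positive CNF formula with k ≥ 1 variables and n ≥ 1 clauses (each clause a nonempty subset of the variables). Then every connected dominating set S of G_F contains at least three vertices from each gadget B_i, i ∈ [k]. -/

import Mathlib

namespace CDG

/-- Vertices of the graph `B`. -/
inductive BVert : Type
  | a | e | b | b' | h | k | f1 | g1 | f2 | g2

/-- The edges of the graph `B`. -/
def BRel : BVert → BVert → Prop
  | .a, .e => True
  | .e, .b => True
  | .b, .b' => True
  | .a, .h => True
  | .h, .e => True
  | .e, .f1 => True
  | .f1, .b => True
  | .b, .f2 => True
  | .f2, .e => True
  | .e, .g1 => True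
  | .g1, .f1 => True
  | .e, .g2 => True
  | .g2, .f2 => True
  | .h, .k => True
  | .k, .a => True
  | _, _ => False

/-- The graph `B`. -/
def graphB : SimpleGraph BVert := SimpleGraph.fromRel BRel

/-- `S` is a connected dominating set of `G`: every vertex is in `S` or adjacent to a
vertex of `S`, and the subgraph induced by `S` is connected. -/
def IsConnDomSet {V : Type*} (G : SimpleGraph V) (S : Set V) : Prop :=
  (∀ v : V, v ∈ S ∨ ∃ u ∈ S, G.Adj u v) ∧ (G.induce S).Connected

/-- The connected domination number of `G`. -/
noncomputable def connDomNum {V : Type*} (G : SimpleGraph V) : ℕ :=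
  sInf {m | ∃ S : Set V, IsConnDomSet G S ∧ S.ncard = m}

/-- Vertices of the graph `H n`: `u i` is `u_i` for `0 ≤ i ≤ n+1`, `x t` is `x_{t+1}` and
`y t` is `y_{t+1}` for `0 ≤ t ≤ n-2`. -/
inductive HVert (n : ℕ) : Type
  | u : Fin (n + 2) → HVert n
  | x : Fin (n - 1) → HVert n
  | y : Fin (n - 1) → HVert n

/-- The edges of the graph `H n`. -/
def HRel (n : ℕ) : HVert n → HVert n → Prop
  | .u i, .u j => (j : ℕ) = (i : ℕ) + 1
  | .u i, .x t => (i : ℕ) = (t : ℕ) + 1 ∨ (i : ℕ) = (t : ℕ) + 2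
  | .x t, .y s => t = s
  | .y s, .u i => (i : ℕ) = (s : ℕ) + 2
  | _, _ => False

/-- The graph `H n`. -/
def graphH (n : ℕ) : SimpleGraph (HVert n) := SimpleGraph.fromRel (HRel n)

/-- Vertices of the graph `C m`: `cc i` is `c^{i+1}` and `dd i` is `d^{i+1}` for `0 ≤ i ≤ m-1`. -/
inductive CVert (m : ℕ) : Type
  | c : CVert m
  | d : CVert m
  | cc : Fin m → CVert m
  | dd : Fin m → CVert m

/-- The edges of the graph `C m`. -/
def CRel (m : ℕ) : CVert m → CVert m → Prop
  | .c, .d => True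
  | .c, .dd _ => True
  | .cc i, .dd j => i = j
  | _, _ => False

/-- The graph `C m`. -/
def graphC (m : ℕ) : SimpleGraph (CVert m) := SimpleGraph.fromRel (CRel m)

/-- Vertices of the graph `A`. -/
inductive AVert : Type
  | p1 | p2 | p3 | q1 | q2 | r1 | r2

/-- The edges of the graph `A`. -/
def ARel : AVert → AVert → Prop
  | .p1, .p2 => True
  | .p2, .p3 => True
  | .p1, .q1 => True
  | .q1, .r1 => True
  | .p2, .q1 => True
  | .p2, .r1 => True
  | .p2, .q2 => True
  | .q2, .r2 => True
  | .p3, .q2 => True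
  | .p3, .r2 => True
  | _, _ => False

/-- Vertices of the graph `G_F`, for a formula with `k` variables and `n` clauses:
`k` copies of `B`, `n` copies of `C n`, one copy of `H (2n+7)`, and a copy of `A`
exactly when `k` is odd (realized as `AVert × Fin (k % 2)`). -/
abbrev GVert (k n : ℕ) : Type :=
  (Fin k × BVert) ⊕ (Fin n × CVert n) ⊕ HVert (2 * n + 7) ⊕ (AVert × Fin (k % 2))

/-- The edges of the graph `G_F`, where the formula `F` assigns to each clause `j`
the (nonempty) set of variables appearing in it. -/
def GRel (k n : ℕ) (F : Fin n → Finset (Fin k)) : GVert k n → GVert k n → Prop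
  | .inl (i, v), .inl (i', w) => i = i' ∧ BRel v w
  | .inr (.inl (j, v)), .inr (.inl (j', w)) => j = j' ∧ CRel n v w
  | .inr (.inr (.inl v)), .inr (.inr (.inl w)) => HRel (2 * n + 7) v w
  | .inr (.inr (.inr (v, _))), .inr (.inr (.inr (w, _))) => ARel v w
  | .inr (.inl (j, v)), .inl (i, w) =>
      i ∈ F j ∧ w = .a ∧ (v = .c ∨ ∃ t, v = .cc t)
  | .inr (.inr (.inl v)), .inl (i, w) =>
      v = .u ⟨0, by omega⟩ ∧ (w = .a ∨ w = .b)
  | .inr (.inr (.inr (v, _))), .inr (.inr (.inl w)) =>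
      v = .p1 ∧ w = .u ⟨0, by omega⟩
  | _, _ => False

/-- The graph `G_F`. -/
def graphGF (k n : ℕ) (F : Fin n → Finset (Fin k)) : SimpleGraph (GVert k n) :=
  SimpleGraph.fromRel (GRel k n F)

/-- Vertices of the graph `G'_F`, for a formula with `k` variables and `n` clauses:
`k` copies of `B`, `n` copies of `C n`, one copy of `H 6`, and a copy of `A`
exactly when `k` is odd (realized as `AVert × Fin (k % 2)`). -/
abbrev GVert' (k n : ℕ) : Type :=
  (Fin k × BVert) ⊕ (Fin n × CVert n) ⊕ HVert 6 ⊕ (AVert × Fin (k % 2))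

/-- The edges of the graph `G'_F`. -/
def GRel' (k n : ℕ) (F : Fin n → Finset (Fin k)) : GVert' k n → GVert' k n → Prop
  | .inl (i, v), .inl (i', w) => i = i' ∧ BRel v w
  | .inr (.inl (j, v)), .inr (.inl (j', w)) => j = j' ∧ CRel n v w
  | .inr (.inr (.inl v)), .inr (.inr (.inl w)) => HRel 6 v w
  | .inr (.inr (.inr (v, _))), .inr (.inr (.inr (w, _))) => ARel v w
  | .inr (.inl (j, v)), .inl (i, w) =>
      i ∈ F j ∧ w = .a ∧ (v = .c ∨ ∃ t, v = .cc t)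
  | .inr (.inr (.inl v)), .inl (i, w) =>
      v = .u ⟨7, by omega⟩ ∧ (w = .a ∨ w = .b)
  | .inr (.inr (.inr (v, _))), .inr (.inr (.inl w)) =>
      v = .p1 ∧ w = .u ⟨7, by omega⟩
  | _, _ => False

/-- The graph `G'_F`. -/
def graphGF' (k n : ℕ) (F : Fin n → Finset (Fin k)) : SimpleGraph (GVert' k n) :=
  SimpleGraph.fromRel (GRel' k n F)

/-!
Every vertex of `B_i` other than `a` and `b` has all its neighbours in `G_F` inside `B_i`.
In `B` the closed neighbourhoods of `b'`, `k`, `g₁`, `g₂` are `{b, b'}`, `{k, h, a}`,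
`{e, g₁, f₁}`, `{e, g₂, f₂}`, so a dominating set meets each of them inside `B_i`. If it
contains `e_i`, it meets the disjoint sets `{b, b'}`, `{k, h, a}`, `{e}`; otherwise it meets
the disjoint sets `{b, b'}`, `{g₁, f₁}`, `{g₂, f₂}`.
-/

deriving instance DecidableEq for BVert

instance : Fintype BVert :=
  ⟨{.a, .e, .b, .b', .h, .k, .f1, .g1, .f2, .g2}, fun v => by cases v <;> decide⟩

instance : DecidableRel BRel := fun v w => by
  cases v <;> cases w <;> unfold BRel <;> infer_instance

instance : DecidableRel graphB.Adj :=
  inferInstanceAs (DecidableRel (SimpleGraph.fromRel BRel).Adj)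

theorem _root_.Finset.three_le_card_of_inter_nonempty {α : Type*} [DecidableEq α] {T A B C : Finset α}
    (hA : (T ∩ A).Nonempty) (hB : (T ∩ B).Nonempty) (hC : (T ∩ C).Nonempty)
    (hAB : Disjoint A B) (hAC : Disjoint A C) (hBC : Disjoint B C) : 3 ≤ T.card := by
  obtain ⟨x, hx⟩ := hA
  obtain ⟨y, hy⟩ := hB
  obtain ⟨z, hz⟩ := hC
  rw [Finset.mem_inter] at hx hy hz
  exact Finset.two_lt_card_iff.2 ⟨x, y, z, hx.1, hy.1, hz.1,
    hAB.forall_ne_finset hx.2 hy.2, hAC.forall_ne_finset hx.2 hz.2,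
    hBC.forall_ne_finset hy.2 hz.2⟩

theorem three_le_ncard_of_dominates_graphB {T : Set BVert}
    (hT : ∀ w, w ≠ .a → w ≠ .b → ∃ v ∈ T, v = w ∨ graphB.Adj v w) : 3 ≤ T.ncard := by
  rw [Set.ncard_eq_toFinset_card T T.toFinite]
  set U := T.toFinite.toFinset
  have hU : ∀ v, v ∈ U ↔ v ∈ T := fun v => Set.Finite.mem_toFinset _
  have meets : ∀ w (N : Finset BVert), w ≠ .a → w ≠ .b →
      (∀ v, v = w ∨ graphB.Adj v w → v ∈ N) → (U ∩ N).Nonempty := by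
    intro w N ha hb hN
    obtain ⟨v, hvT, hv⟩ := hT w ha hb
    exact ⟨v, Finset.mem_inter.2 ⟨(hU v).2 hvT, hN v hv⟩⟩
  have hb' : (U ∩ {.b, .b'}).Nonempty := meets .b' _ (by decide) (by decide) (by decide)
  have hg1 : (U ∩ {.e, .g1, .f1}).Nonempty := meets .g1 _ (by decide) (by decide) (by decide)
  have hg2 : (U ∩ {.e, .g2, .f2}).Nonempty := meets .g2 _ (by decide) (by decide) (by decide)
  by_cases he : BVert.e ∈ T
  · have hk : (U ∩ {.k, .h, .a}).Nonempty := meets .k _ (by decide) (by decide) (by decide)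
    exact Finset.three_le_card_of_inter_nonempty hb' hk (C := {.e})
      ⟨.e, Finset.mem_inter.2 ⟨(hU _).2 he, Finset.mem_singleton_self _⟩⟩
      (by decide) (by decide) (by decide)
  · rw [Finset.inter_insert_of_notMem (mt (hU _).1 he)] at hg1 hg2
    exact Finset.three_le_card_of_inter_nonempty hb' hg1 hg2 (by decide) (by decide) (by decide)

section graphGF

variable {k n : ℕ} {F : Fin n → Finset (Fin k)}

theorem exists_eq_inl_of_graphGF_adj {u : GVert k n} {i : Fin k} {w : BVert}
    (ha : w ≠ .a) (hb : w ≠ .b) (h : (graphGF k n F).Adj u (.inl (i, w))) :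
    ∃ v, u = .inl (i, v) ∧ graphB.Adj v w := by
  rw [graphGF, SimpleGraph.fromRel_adj] at h
  obtain ⟨hne, hrel⟩ := h
  rcases u with ⟨i', v⟩ | ⟨⟨j, v⟩ | v | ⟨v, t⟩⟩
  · have hvw : i' = i → v ≠ w := by rintro rfl rfl; exact hne rfl
    simp only [GRel] at hrel
    rcases hrel with ⟨rfl, hr⟩ | ⟨rfl, hr⟩
    · exact ⟨v, rfl, (SimpleGraph.fromRel_adj _ _ _).2 ⟨hvw rfl, .inl hr⟩⟩
    · exact ⟨v, rfl, (SimpleGraph.fromRel_adj _ _ _).2 ⟨hvw rfl, .inr hr⟩⟩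
  all_goals simp [GRel, ha, hb] at hrel

theorem dominates_graphB_of_dominates_graphGF {S : Set (GVert k n)}
    (hS : ∀ v, v ∈ S ∨ ∃ u ∈ S, (graphGF k n F).Adj u v) (i : Fin k) (w : BVert)
    (ha : w ≠ .a) (hb : w ≠ .b) : ∃ v ∈ {v | .inl (i, v) ∈ S}, v = w ∨ graphB.Adj v w := by
  rcases hS (.inl (i, w)) with hw | ⟨u, hu, hadj⟩
  · exact ⟨w, hw, .inl rfl⟩
  · obtain ⟨v, rfl, hvw⟩ := exists_eq_inl_of_graphGF_adj ha hb hadj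
    exact ⟨v, hu, .inr hvw⟩

end graphGF

theorem connDomSet_three_in_each_B_general (k n : ℕ)
    (F : Fin n → Finset (Fin k))
    (S : Set (GVert k n)) (hS : IsConnDomSet (graphGF k n F) S) (i : Fin k) :
    3 ≤ (S ∩ {v : GVert k n | ∃ w : BVert, v = .inl (i, w)}).ncard := by
  have hcopy : S ∩ {v : GVert k n | ∃ w : BVert, v = .inl (i, w)} =
      (fun w => .inl (i, w)) '' {w | .inl (i, w) ∈ S} := by
    ext v
    constructor
    · rintro ⟨hv, w, rfl⟩
      exact ⟨w, hv, rfl⟩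
    · rintro ⟨w, hw, rfl⟩
      exact ⟨hw, w, rfl⟩
  rw [hcopy, Set.ncard_image_of_injective _ fun w w' h => by simpa using h]
  exact three_le_ncard_of_dominates_graphB (dominates_graphB_of_dominates_graphGF hS.1 i)

theorem connDomSet_three_in_each_B (k n : ℕ) (hk : 1 ≤ k) (hn : 1 ≤ n)
    (F : Fin n → Finset (Fin k)) (hF : ∀ j, (F j).Nonempty)
    (S : Set (GVert k n)) (hS : IsConnDomSet (graphGF k n F) S) (i : Fin k) :
    3 ≤ (S ∩ {v : GVert k n | ∃ w : BVert, v = .inl (i, w)}).ncard :=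
  connDomSet_three_in_each_B_general k n F S hS i

end CDG
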